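/- arXiv:2302.09710 — 8 statements merged into one kernel-verified Lean document; each statement's English description precedes it below -/
import Mathlib

section
/- For every natural number n and real r ≥ 0, there exist coefficients [n+r k+r]_{r,λ} (the λ-r-Stirling numbers of the first kind) such that ⟨x+r⟩_{n,λ} = ∑_{k=0}^n [n+r k+r]_{r,λ} x^k, and they satisfy [n+r k+r]_{r,λ} = ∑_{m=k}^n [n m]_λ · C(m,k) · r^{m-k}. -/
/-- λ-rising factorial ⟨x⟩_{n,λ} = ∏_{i<n} (x + iλ). -/
noncomputable def lrise (lam x : ℝ) (n : ℕ) : ℝ :=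
  ∏ i ∈ Finset.range n, (x + (i : ℝ) * lam)

/-- Unsigned λ-Stirling numbers of the first kind: coefficient of x^k in ⟨x⟩_{n,λ}. -/
noncomputable def lstir (lam : ℝ) (n k : ℕ) : ℝ :=
  (∏ i ∈ Finset.range n, (Polynomial.X + Polynomial.C ((i : ℝ) * lam))).coeff k

theorem stmt4 (lam r : ℝ) (hr : 0 ≤ r) (n : ℕ) :
    ∃ c : ℕ → ℝ,
      (∀ x : ℝ, lrise lam (x + r) n = ∑ k ∈ Finset.range (n + 1), c k * x ^ k) ∧
      (∀ k : ℕ, k ≤ n →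
        c k = ∑ m ∈ Finset.Icc k n, lstir lam n m * (m.choose k : ℝ) * r ^ (m - k)) := by
  set P : Polynomial ℝ := ∏ i ∈ Finset.range n, (Polynomial.X + Polynomial.C ((i : ℝ) * lam))
    with hP
  refine ⟨fun k => ∑ m ∈ Finset.Icc k n, lstir lam n m * (m.choose k : ℝ) * r ^ (m - k),
    ?_, fun k _ => rfl⟩
  intro x
  have hdeg : P.natDegree < n + 1 := by
    apply Nat.lt_succ_of_le
    refine le_trans (Polynomial.natDegree_prod_le _ _) ?_
    rw [Finset.sum_congr rfl
      (fun i _ => Polynomial.natDegree_X_add_C ((i : ℝ) * lam) : ∀ i ∈ Finset.range n, _)]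
    simp
  have h1 : lrise lam (x + r) n = P.eval (x + r) := by
    simp [lrise, hP, Polynomial.eval_prod]
  rw [h1, Polynomial.eval_eq_sum_range' hdeg]
  have h2 : ∀ m : ℕ, (x + r) ^ m =
      ∑ k ∈ Finset.range (m + 1), x ^ k * r ^ (m - k) * (m.choose k : ℝ) :=
    fun m => add_pow x r m
  calc ∑ m ∈ Finset.range (n + 1), P.coeff m * (x + r) ^ m
      = ∑ m ∈ Finset.range (n + 1), ∑ k ∈ Finset.range (m + 1),
          P.coeff m * (x ^ k * r ^ (m - k) * (m.choose k : ℝ)) := by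
        refine Finset.sum_congr rfl fun m _ => ?_
        rw [h2 m, Finset.mul_sum]
    _ = ∑ k ∈ Finset.range (n + 1), ∑ m ∈ Finset.Icc k n,
          P.coeff m * (x ^ k * r ^ (m - k) * (m.choose k : ℝ)) := by
        refine Finset.sum_comm' ?_
        intro m k
        simp only [Finset.mem_range, Finset.mem_Icc]
        omega
    _ = ∑ k ∈ Finset.range (n + 1),
          (∑ m ∈ Finset.Icc k n, lstir lam n m * (m.choose k : ℝ) * r ^ (m - k)) * x ^ k := by
        refine Finset.sum_congr rfl fun k _ => ?_
        rw [Finset.sum_mul]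
        refine Finset.sum_congr rfl fun m _ => ?_
        show P.coeff m * _ = P.coeff m * _ * _ * _
        ring
end

section
/- In any (noncommutative) ring, if elements a and a† satisfy a·a† − a†·a = λ·a (where λ is a central element), then for all n ≥ 1, (a†·a)^n = ⟨a†⟩_{n,λ} · a^n, where ⟨a†⟩_{n,λ} = a†(a†+λ)(a†+2λ)⋯(a†+(n−1)λ). -/
private lemma pow_mul_ad {R : Type*} [Ring R] (lam : R) (hlam : ∀ x : R, lam * x = x * lam)
    (a ad : R) (h : a * ad - ad * a = lam * a) (k : ℕ) :
    a ^ k * ad = (ad + k • lam) * a ^ k := by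
  induction k with
  | zero => simp
  | succ k ih =>
    have hA : a * ad = lam * a + ad * a := sub_eq_iff_eq_add.mp h
    calc a ^ (k+1) * ad = a * (a ^ k * ad) := by rw [pow_succ', mul_assoc]
      _ = a * ((ad + k • lam) * a ^ k) := by rw [ih]
      _ = (a * ad + k • (a * lam)) * a ^ k := by
          rw [← mul_assoc, mul_add, mul_smul_comm]
      _ = (ad + (k+1) • lam) * a ^ (k+1) := by
          rw [hA, ← hlam a, pow_succ', succ_nsmul]
          noncomm_ring

theorem stmt5 {R : Type*} [Ring R] (lam : R) (hlam : ∀ x : R, lam * x = x * lam)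
    (a ad : R) (h : a * ad - ad * a = lam * a) (n : ℕ) (hn : 1 ≤ n) :
    (ad * a) ^ n = ((List.range n).map (fun i => ad + (i : ℕ) • lam)).prod * a ^ n := by
  clear hn
  induction n with
  | zero => simp
  | succ n ih =>
    rw [pow_succ, ih, List.range_succ, List.map_append, List.prod_append]
    simp only [List.map_cons, List.map_nil, List.prod_cons, List.prod_nil, mul_one]
    calc ((List.range n).map (fun i => ad + (i : ℕ) • lam)).prod * a ^ n * (ad * a)
        = ((List.range n).map (fun i => ad + (i : ℕ) • lam)).prod * (a ^ n * ad) * a := by noncomm_ring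
      _ = ((List.range n).map (fun i => ad + (i : ℕ) • lam)).prod * ((ad + n • lam) * a ^ n) * a := by
          rw [pow_mul_ad lam hlam a ad h n]
      _ = _ := by rw [pow_succ]; noncomm_ring
end

section
/- In any ring with central λ and central r, if a·a† − a†·a = λ·a, then for all n ≥ 1, ((a†+r)·a)^n = ⟨a†+r⟩_{n,λ} · a^n, where ⟨a†+r⟩_{n,λ} = ∏_{i=0}^{n-1}(a† + r + iλ). -/
theorem stmt7 {R : Type*} [Ring R] (lam r : R)
    (hlam : ∀ x : R, lam * x = x * lam) (hr : ∀ x : R, r * x = x * r)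
    (a ad : R) (h : a * ad - ad * a = lam * a) (n : ℕ) (hn : 1 ≤ n) :
    ((ad + r) * a) ^ n
      = ((List.range n).map (fun i => ad + r + (i : ℕ) • lam)).prod * a ^ n := by
  have had : a * ad = ad * a + lam * a := by
    have := sub_eq_iff_eq_add.mp h
    rw [this]; abel
  have key : ∀ m : ℕ, a ^ m * (ad + r) = (ad + r + (m : ℕ) • lam) * a ^ m := by
    intro m
    induction m with
    | zero => simp
    | succ k ih =>
      have hlam' : a * ((k : ℕ) • lam) = ((k : ℕ) • lam) * a := by
        rw [smul_mul_assoc, mul_smul_comm, hlam]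
      have expand : a * (ad + r + (k : ℕ) • lam) = (ad + r + ((k : ℕ) + 1) • lam) * a := by
        rw [mul_add, mul_add, had, hlam', ← hr a, add_smul, one_smul]
        noncomm_ring
      calc a ^ (k + 1) * (ad + r) = a * (a ^ k * (ad + r)) := by
            rw [pow_succ', mul_assoc]
        _ = a * ((ad + r + (k : ℕ) • lam) * a ^ k) := by rw [ih]
        _ = (a * (ad + r + (k : ℕ) • lam)) * a ^ k := by rw [mul_assoc]
        _ = ((ad + r + ((k : ℕ) + 1) • lam) * a) * a ^ k := by rw [expand]
        _ = (ad + r + ((k : ℕ) + 1) • lam) * a ^ (k + 1) := by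
            rw [mul_assoc, ← pow_succ']
        _ = (ad + r + ((k + 1 : ℕ)) • lam) * a ^ (k + 1) := by norm_cast
  clear hn
  induction n with
  | zero => simp
  | succ k ih =>
    rw [pow_succ, ih, List.range_succ, List.map_append, List.prod_append]
    simp only [List.map_cons, List.map_nil, List.prod_cons, List.prod_nil, mul_one]
    rw [mul_assoc, mul_assoc, ← mul_assoc (a^k), key k, mul_assoc, ← pow_succ, ← mul_assoc]
end

section
/- For all natural numbers m, n and real λ: (m+n)_λ! = ∑_{j=0}^m ∑_{k=0}^n [m j]_λ · C(n,k) · ⟨mλ⟩_{n-k,λ} · ⟨1⟩_{k,λ} (a λ-analogue of the dual of Spivey's identity). -/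
lemma lrise_succ (lam x : ℝ) (n : ℕ) :
    lrise lam x (n + 1) = lrise lam x n * (x + (n : ℝ) * lam) :=
  Finset.prod_range_succ _ _

lemma vand (lam x y : ℝ) (n : ℕ) :
    lrise lam (x + y) n
      = ∑ k ∈ Finset.range (n + 1),
          (n.choose k : ℝ) * lrise lam x (n - k) * lrise lam y k := by
  induction n with
  | zero => simp [lrise]
  | succ n ih =>
    rw [lrise_succ, ih, Finset.sum_mul]
    have key : ∀ k ∈ Finset.range (n + 1),
        (n.choose k : ℝ) * lrise lam x (n - k) * lrise lam y k * (x + y + (n : ℝ) * lam)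
        = (n.choose k : ℝ) * lrise lam x (n - k + 1) * lrise lam y k
          + (n.choose k : ℝ) * lrise lam x (n - k) * lrise lam y (k + 1) := by
      intro k hk
      have hk' : k ≤ n := Finset.mem_range_succ_iff.mp hk
      have hc : ((n - k : ℕ) : ℝ) = (n : ℝ) - (k : ℝ) := by
        rw [Nat.cast_sub hk']
      rw [lrise_succ, lrise_succ, hc]
      ring
    rw [Finset.sum_congr rfl key, Finset.sum_add_distrib]
    -- RHS manipulation
    have h1 : ∑ k ∈ Finset.range (n + 1 + 1),
        ((n + 1).choose k : ℝ) * lrise lam x (n + 1 - k) * lrise lam y k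
        = ((n + 1).choose 0 : ℝ) * lrise lam x (n + 1) * lrise lam y 0
          + ∑ k ∈ Finset.range (n + 1),
            ((n + 1).choose (k + 1) : ℝ) * lrise lam x (n - k) * lrise lam y (k + 1) := by
      rw [Finset.sum_range_succ' (fun k => ((n + 1).choose k : ℝ) * lrise lam x (n + 1 - k)
        * lrise lam y k) (n + 1), add_comm]
      simp [Nat.succ_sub_succ_eq_sub]
    rw [h1]
    have h2 : ∀ k ∈ Finset.range (n + 1),
        ((n + 1).choose (k + 1) : ℝ) * lrise lam x (n - k) * lrise lam y (k + 1)
        = (n.choose (k + 1) : ℝ) * lrise lam x (n - k) * lrise lam y (k + 1)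
          + (n.choose k : ℝ) * lrise lam x (n - k) * lrise lam y (k + 1) := by
      intro k _
      rw [Nat.choose_succ_succ]
      push_cast
      ring
    rw [Finset.sum_congr rfl h2, Finset.sum_add_distrib, ← add_assoc]
    congr 1
    have h3 : ((n + 1).choose 0 : ℝ) * lrise lam x (n + 1) * lrise lam y 0
          + ∑ k ∈ Finset.range (n + 1),
            (n.choose (k + 1) : ℝ) * lrise lam x (n - k) * lrise lam y (k + 1)
        = ∑ k ∈ Finset.range (n + 2),
            (n.choose k : ℝ) * lrise lam x (n + 1 - k) * lrise lam y k := by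
      rw [Finset.sum_range_succ' (fun k => (n.choose k : ℝ) * lrise lam x (n + 1 - k)
        * lrise lam y k) (n + 1), add_comm]
      norm_num [Nat.succ_sub_succ_eq_sub]
    rw [h3, Finset.sum_range_succ (fun k => (n.choose k : ℝ) * lrise lam x (n + 1 - k)
      * lrise lam y k) (n + 1)]
    have hz : (n.choose (n + 1) : ℝ) = 0 := by simp
    rw [hz, zero_mul, zero_mul, add_zero]
    refine Finset.sum_congr rfl fun k hk => ?_
    have hk' : k ≤ n := Finset.mem_range_succ_iff.mp hk
    rw [Nat.succ_sub hk']

lemma lrise_split (lam : ℝ) (m n : ℕ) :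
    lrise lam 1 (m + n) = lrise lam 1 m * lrise lam (1 + (m : ℝ) * lam) n := by
  unfold lrise
  rw [Finset.prod_range_add]
  congr 1
  refine Finset.prod_congr rfl fun i _ => ?_
  push_cast
  ring

lemma lstir_sum (lam : ℝ) (m : ℕ) :
    ∑ j ∈ Finset.range (m + 1), lstir lam m j = lrise lam 1 m := by
  set P := ∏ i ∈ Finset.range m, (Polynomial.X + Polynomial.C ((i : ℝ) * lam)) with hP
  have hdeg : P.natDegree < m + 1 := by
    refine Nat.lt_succ_of_le ?_
    calc P.natDegree ≤ ∑ i ∈ Finset.range m,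
        (Polynomial.X + Polynomial.C ((i : ℝ) * lam)).natDegree :=
          Polynomial.natDegree_prod_le _ _
      _ ≤ ∑ _i ∈ Finset.range m, 1 := by
          exact Finset.sum_le_sum fun i _ => (Polynomial.natDegree_X_add_C _).le
      _ = m := by simp
  have heval : P.eval 1 = ∑ j ∈ Finset.range (m + 1), P.coeff j * 1 ^ j :=
    Polynomial.eval_eq_sum_range' hdeg 1
  have heval2 : P.eval 1 = lrise lam 1 m := by
    rw [hP, Polynomial.eval_prod]
    simp [lrise]
  rw [← heval2, heval]
  simp [lstir, hP]

theorem stmt11 (lam : ℝ) (m n : ℕ) :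
    lrise lam 1 (m + n)
      = ∑ j ∈ Finset.range (m + 1), ∑ k ∈ Finset.range (n + 1),
          lstir lam m j * (n.choose k : ℝ) * lrise lam ((m : ℝ) * lam) (n - k)
            * lrise lam 1 k := by
  have key : lrise lam 1 (m + n)
      = (∑ j ∈ Finset.range (m + 1), lstir lam m j)
        * ∑ k ∈ Finset.range (n + 1),
            (n.choose k : ℝ) * lrise lam ((m : ℝ) * lam) (n - k) * lrise lam 1 k := by
    rw [lstir_sum, lrise_split]
    congr 1
    have := vand lam ((m : ℝ) * lam) 1 n
    rw [add_comm (1 : ℝ) ((m : ℝ) * lam)]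
    exact this
  rw [key, Finset.sum_mul]
  refine Finset.sum_congr rfl fun j _ => ?_
  rw [Finset.mul_sum]
  refine Finset.sum_congr rfl fun k _ => ?_
  ring
end

section
/- For all natural numbers m, n: (m+n)! = ∑_{j=0}^m ∑_{k=0}^n [m j] · C(n,k) · ⟨m⟩_{n-k} · k!, where [m j] are the unsigned Stirling numbers of the first kind and ⟨m⟩_{r} = m(m+1)⋯(m+r−1) is the rising factorial (Mező's dual of Spivey's identity). -/
open Nat

/-- Unsigned Stirling numbers of the first kind: coefficient of x^j in x(x+1)⋯(x+m−1). -/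
noncomputable def ustir (m j : ℕ) : ℕ :=
  (∏ i ∈ Finset.range m, (Polynomial.X + Polynomial.C i) : Polynomial ℕ).coeff j

/-- Rising factorial ⟨m⟩_r = m(m+1)⋯(m+r−1). -/
def rise (m r : ℕ) : ℕ := ∏ i ∈ Finset.range r, (m + i)

lemma rise_eq_asc (m r : ℕ) : rise m r = m.ascFactorial r := by
  induction r with
  | zero => rfl
  | succ r ih =>
    rw [rise, Finset.prod_range_succ, ← rise, ih, Nat.ascFactorial_succ, Nat.mul_comm]

lemma ustir_sum (m : ℕ) : ∑ j ∈ Finset.range (m + 1), ustir m j = m ! := by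
  set P : Polynomial ℕ := ∏ i ∈ Finset.range m, (Polynomial.X + Polynomial.C i) with hP
  have hdeg : P.natDegree ≤ m := by
    apply le_trans (Polynomial.natDegree_prod_le _ _)
    apply le_trans (Finset.sum_le_card_nsmul _ _ 1 ?_)
    · simp
    · intro i _
      exact le_trans (Polynomial.natDegree_add_le _ _) (by simp)
  have heval : P.eval 1 = m ! := by
    rw [hP, Polynomial.eval_prod]
    simp only [Polynomial.eval_add, Polynomial.eval_X, Polynomial.eval_C]
    rw [← Finset.prod_range_add_one_eq_factorial]
    exact Finset.prod_congr rfl fun i _ => by ring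
  have := Polynomial.eval_eq_sum_range' (Nat.lt_succ_of_le hdeg) (1 : ℕ)
  rw [heval] at this
  rw [this]
  exact Finset.sum_congr rfl fun j _ => by simp [ustir, hP]

lemma key (m n : ℕ) :
    m ! * ∑ k ∈ Finset.range (n + 1), n.choose k * rise m (n - k) * k ! = (m + n)! := by
  have hstep : ∑ k ∈ Finset.range (n + 1), n.choose k * rise m (n - k) * k !
      = ∑ r ∈ Finset.range (n + 1), n ! * (m + r - 1).choose r := by
    rw [← Finset.sum_range_reflect]
    apply Finset.sum_congr rfl
    intro r hr
    have hrn : r ≤ n := Nat.lt_succ_iff.mp (Finset.mem_range.mp hr)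
    simp only [Nat.add_sub_cancel]
    rw [Nat.sub_sub_self hrn, Nat.choose_symm hrn, rise_eq_asc,
      Nat.ascFactorial_eq_factorial_mul_choose']
    rw [← Nat.choose_mul_factorial_mul_factorial hrn]
    ring
  rw [hstep]
  cases m with
  | zero =>
    have : ∀ r ∈ Finset.range (n + 1), n ! * (0 + r - 1).choose r
        = if r = 0 then n ! else 0 := by
      intro r _
      cases r with
      | zero => simp
      | succ r =>
        rw [show 0 + (r + 1) - 1 = r by omega, Nat.choose_eq_zero_of_lt r.lt_succ_self]
        simp
    rw [Finset.sum_congr rfl this, Finset.sum_ite_eq' (Finset.range (n + 1)) 0 (fun _ => n !)]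
    simp
  | succ m' =>
    rw [← Finset.mul_sum]
    have : ∑ r ∈ Finset.range (n + 1), (m' + 1 + r - 1).choose r
        = (n + m' + 1).choose (m' + 1) := by
      rw [← Nat.sum_range_add_choose n m']
      apply Finset.sum_congr rfl
      intro r _
      rw [show m' + 1 + r - 1 = r + m' by omega]
      exact Nat.choose_symm_add
    rw [this, show m' + 1 + n = n + m' + 1 by omega,
      ← Nat.choose_mul_factorial_mul_factorial (show m' + 1 ≤ n + m' + 1 by omega),
      show n + m' + 1 - (m' + 1) = n by omega]
    ring

theorem stmt12 (m n : ℕ) :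
    (m + n) ! = ∑ j ∈ Finset.range (m + 1), ∑ k ∈ Finset.range (n + 1),
      ustir m j * n.choose k * rise m (n - k) * k ! := by
  have : ∑ j ∈ Finset.range (m + 1), ∑ k ∈ Finset.range (n + 1),
      ustir m j * n.choose k * rise m (n - k) * k !
      = (∑ j ∈ Finset.range (m + 1), ustir m j) *
        ∑ k ∈ Finset.range (n + 1), n.choose k * rise m (n - k) * k ! := by
    rw [Finset.sum_mul]
    apply Finset.sum_congr rfl
    intro j _
    rw [Finset.mul_sum]
    exact Finset.sum_congr rfl fun k _ => by ring
  rw [this, ustir_sum, key]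
end

section
/- For all n ≥ 1, λ ∈ ℝ, and x ∈ ℝ: e^{−(x+nλ)} · ((X∘δ_λ)^n exp)(x) = ⟨x⟩_{n,λ} = ∑_{k=0}^n [n k]_λ x^k, where (X∘δ_λ)(f)(x) = x·f(x+λ) and exp is the exponential function. -/
/-- The λ-shift operator: (δ_λ f)(x) = f(x+λ). -/
def lshift (lam : ℝ) (f : ℝ → ℝ) : ℝ → ℝ := fun x => f (x + lam)

/-- Multiplication by x. -/
def mulX (f : ℝ → ℝ) : ℝ → ℝ := fun x => x * f x

lemma iter_eq (lam : ℝ) (n : ℕ) : ∀ x : ℝ,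
    ((mulX ∘ lshift lam)^[n] Real.exp) x
      = lrise lam x n * Real.exp (x + (n : ℝ) * lam) := by
  induction n with
  | zero => intro x; simp [lrise]
  | succ n ih =>
    intro x
    rw [Function.iterate_succ_apply']
    simp only [Function.comp_apply, mulX, lshift]
    rw [ih (x + lam)]
    unfold lrise
    have hprod : (∏ i ∈ Finset.range n, (x + lam + (i : ℝ) * lam))
        = ∏ i ∈ Finset.range n, (x + ((i : ℝ) + 1) * lam) :=
      Finset.prod_congr rfl (fun i _ => by ring)
    rw [Finset.prod_range_succ']
    push_cast
    rw [hprod, show x + lam + (n : ℝ) * lam = x + ((n : ℝ) + 1) * lam by ring]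
    ring

theorem stmt16 (lam : ℝ) (n : ℕ) (hn : 1 ≤ n) (x : ℝ) :
    Real.exp (-(x + (n : ℝ) * lam)) * ((mulX ∘ lshift lam)^[n] Real.exp) x
        = lrise lam x n ∧
    lrise lam x n = ∑ k ∈ Finset.range (n + 1), lstir lam n k * x ^ k := by
  constructor
  · rw [iter_eq]
    rw [show Real.exp (-(x + (n:ℝ)*lam)) * (lrise lam x n * Real.exp (x + (n:ℝ)*lam))
        = lrise lam x n * (Real.exp (-(x + (n:ℝ)*lam)) * Real.exp (x + (n:ℝ)*lam)) by ring,
      ← Real.exp_add, show -(x + (n:ℝ)*lam) + (x + (n:ℝ)*lam) = (0:ℝ) by ring,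
      Real.exp_zero, mul_one]
  · set p : Polynomial ℝ := ∏ i ∈ Finset.range n, (Polynomial.X + Polynomial.C ((i : ℝ) * lam)) with hp
    have hdeg : p.natDegree < n + 1 := by
      have := Polynomial.natDegree_prod_le (Finset.range n)
        (fun i => Polynomial.X + Polynomial.C ((i : ℝ) * lam))
      have h2 : ∀ i ∈ Finset.range n,
          (Polynomial.X + Polynomial.C ((i : ℝ) * lam)).natDegree ≤ 1 := by
        intro i _
        exact le_of_eq (Polynomial.natDegree_X_add_C _)
      calc p.natDegree ≤ ∑ i ∈ Finset.range n,
            (Polynomial.X + Polynomial.C ((i : ℝ) * lam)).natDegree := this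
        _ ≤ ∑ _i ∈ Finset.range n, 1 := by exact Finset.sum_le_sum h2
        _ = n := by simp
        _ < n + 1 := Nat.lt_succ_self n
    have heval : p.eval x = lrise lam x n := by
      simp [hp, lrise, Polynomial.eval_prod]
    rw [← heval, Polynomial.eval_eq_sum_range' hdeg, hp]
    unfold lstir
    exact Finset.sum_congr rfl fun k _ => rfl
end

section
/- In any ring with central λ, if a·a† − a†·a = λ·a, then (a†·a)^{m+n} = ∑_{j=0}^m ∑_{k=0}^n [m j]_λ [n k]_λ (a†)^j (a† + mλ)^k a^{m+n}, for all m, n ≥ 0, where [m j]_λ are the (scalar) unsigned λ-Stirling numbers of the first kind acting via scalar multiplication. -/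
open Polynomial Finset

section aux
variable {A : Type*} [Ring A] [Algebra ℝ A] (lam : ℝ) (a ad : A)

lemma aux_comm (h : a * ad - ad * a = lam • a) : a * ad = (ad + lam • 1) * a := by
  have h' : a * ad = ad * a + lam • a := by linear_combination (norm := noncomm_ring) h
  rw [h', add_mul, smul_mul_assoc, one_mul]

lemma aux_pow (h : a * ad - ad * a = lam • a) (k : ℕ) :
    a * ad ^ k = (ad + lam • 1) ^ k * a := by
  induction k with
  | zero => simp
  | succ k ih =>
    rw [pow_succ', ← mul_assoc, aux_comm lam a ad h, mul_assoc, ih, ← mul_assoc, ← pow_succ']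

lemma aux_aeval (h : a * ad - ad * a = lam • a) (p : ℝ[X]) :
    a * aeval ad p = aeval (ad + lam • 1) p * a := by
  induction p using Polynomial.induction_on' with
  | add p q hp hq => simp [mul_add, add_mul, hp, hq]
  | monomial k c =>
    simp only [aeval_monomial]
    rw [← mul_assoc, ← Algebra.commutes, mul_assoc, aux_pow lam a ad h k, ← mul_assoc]

lemma aux_main (h : a * ad - ad * a = lam • a) (n : ℕ) :
    (ad * a) ^ n
      = aeval ad (∏ i ∈ Finset.range n, (X + C ((i : ℝ) * lam))) * a ^ n := by
  induction n with
  | zero => simp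
  | succ n ih =>
    have key : (∏ i ∈ Finset.range n, (X + C ((i : ℝ) * lam))).comp (X + C lam)
        = ∏ i ∈ Finset.range n, (X + C (((i + 1 : ℕ) : ℝ) * lam)) := by
      rw [Polynomial.prod_comp]
      refine Finset.prod_congr rfl fun i _ => ?_
      have : (((i + 1 : ℕ) : ℝ)) * lam = lam + (i : ℝ) * lam := by push_cast; ring
      rw [add_comp, X_comp, C_comp, this, C_add, add_assoc]
    calc (ad * a) ^ (n + 1) = ad * (a * ((ad * a) ^ n)) := by
          rw [pow_succ']; noncomm_ring
      _ = ad * (a * (aeval ad (∏ i ∈ Finset.range n, (X + C ((i : ℝ) * lam))) * a ^ n)) := by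
          rw [ih]
      _ = ad * ((aeval (ad + lam • 1) (∏ i ∈ Finset.range n, (X + C ((i : ℝ) * lam)))) * a ^ (n+1)) := by
          rw [← mul_assoc a, aux_aeval lam a ad h, pow_succ']; noncomm_ring
      _ = aeval ad (∏ i ∈ Finset.range (n+1), (X + C ((i : ℝ) * lam))) * a ^ (n+1) := by
          rw [← mul_assoc]
          congr 1
          have hv : aeval ad (X + C lam : ℝ[X]) = ad + lam • 1 := by
            rw [map_add, aeval_X, aeval_C, Algebra.algebraMap_eq_smul_one]
          rw [← hv, ← aeval_comp, key, Finset.prod_range_succ']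
          simp [mul_comm]

end aux

theorem stmt17 {A : Type*} [Ring A] [Algebra ℝ A] (lam : ℝ) (a ad : A)
    (h : a * ad - ad * a = lam • a) (m n : ℕ) :
    (ad * a) ^ (m + n)
      = ∑ j ∈ Finset.range (m + 1), ∑ k ∈ Finset.range (n + 1),
          (lstir lam m j * lstir lam n k) •
            (ad ^ j * (ad + ((m : ℝ) * lam) • (1 : A)) ^ k * a ^ (m + n)) := by
  have split : (∏ i ∈ Finset.range (m + n), (X + C ((i : ℝ) * lam)))
      = (∏ i ∈ Finset.range m, (X + C ((i : ℝ) * lam)))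
        * (∏ i ∈ Finset.range n, (X + C ((i : ℝ) * lam))).comp (X + C ((m : ℝ) * lam)) := by
    rw [Finset.prod_range_add, Polynomial.prod_comp]
    congr 1
    refine Finset.prod_congr rfl fun i _ => ?_
    have : (((m + i : ℕ) : ℝ)) * lam = (m : ℝ) * lam + (i : ℝ) * lam := by push_cast; ring
    rw [add_comp, X_comp, C_comp, this, C_add, add_assoc]
  have deg : ∀ (N : ℕ), (∏ i ∈ Finset.range N, (X + C ((i : ℝ) * lam))).natDegree < N + 1 := by
    intro N
    have := Polynomial.natDegree_prod_le (Finset.range N)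
      (fun i => X + C ((i : ℝ) * lam))
    simp only [natDegree_X_add_C] at this
    simpa using Nat.lt_succ_of_le (by simpa using this)
  have hm : aeval ad (∏ i ∈ Finset.range m, (X + C ((i : ℝ) * lam)))
      = ∑ j ∈ Finset.range (m + 1), lstir lam m j • ad ^ j :=
    Polynomial.aeval_eq_sum_range' (deg m) ad
  have hy : aeval (ad + ((m : ℝ) * lam) • 1) (∏ i ∈ Finset.range n, (X + C ((i : ℝ) * lam)))
      = ∑ k ∈ Finset.range (n + 1), lstir lam n k • (ad + ((m : ℝ) * lam) • 1) ^ k :=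
    Polynomial.aeval_eq_sum_range' (deg n) _
  have hv : aeval ad (X + C ((m : ℝ) * lam) : ℝ[X]) = ad + ((m : ℝ) * lam) • 1 := by
    rw [map_add, aeval_X, aeval_C, Algebra.algebraMap_eq_smul_one]
  rw [aux_main lam a ad h (m + n), split, map_mul, aeval_comp, hv, hm, hy]
  simp only [Finset.sum_mul, Finset.mul_sum, smul_mul_assoc, mul_smul_comm, smul_smul, mul_assoc]
  simp only [Finset.smul_sum, smul_smul]
  rw [Finset.sum_comm]
  exact Finset.sum_congr rfl fun j _ => Finset.sum_congr rfl fun k _ => by rw [mul_comm]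
end

section
/- For every nonnegative integer k and λ ≠ 0, the exponential generating function of the unsigned λ-Stirling numbers of the first kind is (1/k!)·(−log(1−λt)/λ)^k = ∑_{n≥k} [n k]_λ · t^n/n!, as an identity of formal power series in t. -/
open Nat

noncomputable def Lser (lam : ℝ) : PowerSeries ℝ :=
  PowerSeries.mk (fun m : ℕ => if m = 0 then (0 : ℝ) else lam ^ (m - 1) / m)

lemma lstir_zero_of_lt (lam : ℝ) {n k : ℕ} (h : n < k) : lstir lam n k = 0 := by
  unfold lstir
  apply Polynomial.coeff_eq_zero_of_natDegree_lt
  calc (∏ i ∈ Finset.range n, (Polynomial.X + Polynomial.C ((i : ℝ) * lam))).natDegree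
      ≤ ∑ i ∈ Finset.range n, (Polynomial.X + Polynomial.C ((i : ℝ) * lam)).natDegree :=
        Polynomial.natDegree_prod_le _ _
    _ ≤ ∑ _i ∈ Finset.range n, 1 := by
        apply Finset.sum_le_sum
        intro i _
        exact le_of_eq (Polynomial.natDegree_X_add_C _)
    _ = n := by simp
    _ < k := h

lemma lstir_zero_zero (lam : ℝ) : lstir lam 0 0 = 1 := by simp [lstir]

lemma lstir_succ_zero (lam : ℝ) (n : ℕ) : lstir lam (n + 1) 0 = 0 := by
  unfold lstir
  rw [Polynomial.coeff_zero_eq_eval_zero, Polynomial.eval_prod]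
  apply Finset.prod_eq_zero (Finset.mem_range.2 (Nat.succ_pos n))
  simp

lemma lstir_rec (lam : ℝ) (n k : ℕ) :
    lstir lam (n + 1) (k + 1) = lstir lam n k + (n : ℝ) * lam * lstir lam n (k + 1) := by
  unfold lstir
  rw [Finset.prod_range_succ, mul_add, Polynomial.coeff_add, Polynomial.coeff_mul_X,
    Polynomial.coeff_mul_C]
  ring

lemma derivFun_Lser (lam : ℝ) :
    PowerSeries.derivativeFun (Lser lam) = PowerSeries.mk (fun m : ℕ => lam ^ m) := by
  ext n
  rw [show PowerSeries.derivativeFun (Lser lam) = PowerSeries.derivative ℝ (Lser lam) from rfl,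
    PowerSeries.coeff_derivativeFun]
  simp only [Lser, PowerSeries.coeff_mk, Nat.succ_ne_zero, if_false, Nat.add_sub_cancel]
  have : ((n : ℝ) + 1) ≠ 0 := by positivity
  push_cast
  field_simp

lemma geo_eq (lam : ℝ) :
    (1 - PowerSeries.C lam * PowerSeries.X) * PowerSeries.mk (fun m : ℕ => lam ^ m)
      = 1 := by
  ext n
  cases n with
  | zero => simp [sub_mul, PowerSeries.coeff_C_mul]
  | succ m =>
      rw [sub_mul, one_mul, map_sub, mul_assoc, PowerSeries.coeff_C_mul,
        PowerSeries.coeff_succ_X_mul]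
      simp [pow_succ, mul_comm]

lemma ode (lam : ℝ) (k : ℕ) :
    (1 - PowerSeries.C lam * PowerSeries.X) *
        PowerSeries.derivativeFun (Lser lam ^ (k + 1))
      = ((k : PowerSeries ℝ) + 1) * Lser lam ^ k := by
  have h := Derivation.leibniz_pow (PowerSeries.derivative ℝ) (a := Lser lam) (k + 1)
  have hD : PowerSeries.derivative ℝ (Lser lam ^ (k + 1))
      = PowerSeries.derivativeFun (Lser lam ^ (k + 1)) := rfl
  have hDL : PowerSeries.derivative ℝ (Lser lam) = PowerSeries.derivativeFun (Lser lam) := rfl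
  rw [hD, hDL] at h
  rw [h, Nat.add_sub_cancel, smul_eq_mul, nsmul_eq_mul]
  rw [derivFun_Lser]
  push_cast
  calc (1 - PowerSeries.C lam * PowerSeries.X) *
        (((k : PowerSeries ℝ) + 1) * (Lser lam ^ k * PowerSeries.mk fun m : ℕ => lam ^ m))
      = ((k : PowerSeries ℝ) + 1) * Lser lam ^ k *
          ((1 - PowerSeries.C lam * PowerSeries.X) * PowerSeries.mk fun m : ℕ => lam ^ m) := by
        ring
    _ = ((k : PowerSeries ℝ) + 1) * Lser lam ^ k := by rw [geo_eq]; ring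

lemma rec_c (lam : ℝ) (k n : ℕ) :
    ((n : ℝ) + 1) * PowerSeries.coeff (n + 1) (Lser lam ^ (k + 1))
      = lam * (n : ℝ) * PowerSeries.coeff n (Lser lam ^ (k + 1))
        + ((k : ℝ) + 1) * PowerSeries.coeff n (Lser lam ^ k) := by
  have h := congrArg (PowerSeries.coeff n) (ode lam k)
  rw [sub_mul, one_mul, map_sub, mul_assoc, PowerSeries.coeff_C_mul] at h
  have hrhs : PowerSeries.coeff n (((k : PowerSeries ℝ) + 1) * Lser lam ^ k)
      = ((k : ℝ) + 1) * PowerSeries.coeff n (Lser lam ^ k) := by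
    have : ((k : PowerSeries ℝ) + 1) = PowerSeries.C ((k : ℝ) + 1) := by
      rw [map_add, map_one, map_natCast]
    rw [this, PowerSeries.coeff_C_mul]
  rw [hrhs] at h
  simp only [show ∀ f : PowerSeries ℝ, PowerSeries.derivativeFun f = PowerSeries.derivative ℝ f
    from fun _ => rfl] at h
  cases n with
  | zero =>
      rw [PowerSeries.coeff_zero_X_mul, PowerSeries.coeff_derivativeFun] at h
      push_cast at h ⊢
      linarith [h]
  | succ m =>
      rw [PowerSeries.coeff_succ_X_mul, PowerSeries.coeff_derivativeFun,
        PowerSeries.coeff_derivativeFun] at h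
      push_cast at h ⊢
      nlinarith [h]

lemma coeff_L_pow (lam : ℝ) (k n : ℕ) :
    PowerSeries.coeff n (Lser lam ^ k) = (k ! : ℝ) * lstir lam n k / n ! := by
  induction k generalizing n with
  | zero =>
      cases n with
      | zero => simp [lstir_zero_zero]
      | succ m => simp [lstir_succ_zero]
  | succ k ih =>
      induction n with
      | zero =>
          have hc : PowerSeries.constantCoeff (Lser lam) = 0 := by
            simp [Lser, ← PowerSeries.coeff_zero_eq_constantCoeff_apply]
          have h0 : PowerSeries.coeff 0 (Lser lam ^ (k + 1)) = 0 := by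
            rw [PowerSeries.coeff_zero_eq_constantCoeff_apply, map_pow, hc,
              zero_pow (Nat.succ_ne_zero k)]
          rw [h0, lstir_zero_of_lt lam (Nat.succ_pos k)]
          simp
      | succ n ihn =>
          have hrec := rec_c lam k n
          rw [ihn, ih n] at hrec
          have hn1 : ((n : ℝ) + 1) ≠ 0 := by positivity
          have hnf : ((n ! : ℕ) : ℝ) ≠ 0 := by exact_mod_cast Nat.factorial_ne_zero n
          have hgoal : ((n : ℝ) + 1) * PowerSeries.coeff (n + 1) (Lser lam ^ (k + 1))
              = ((n : ℝ) + 1) * (((k + 1)! : ℝ) * lstir lam (n + 1) (k + 1) / (n + 1)!) := by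
            rw [hrec, lstir_rec lam n k]
            rw [Nat.factorial_succ (k), Nat.factorial_succ n]
            push_cast
            field_simp
            ring
          have := mul_left_cancel₀ hn1 hgoal
          exact this

theorem stmt18 (lam : ℝ) (hlam : lam ≠ 0) (k : ℕ) :
    ((k ! : ℝ)⁻¹ • (PowerSeries.mk (fun m : ℕ =>
        if m = 0 then (0 : ℝ) else lam ^ (m - 1) / m)) ^ k : PowerSeries ℝ)
      = PowerSeries.mk (fun n : ℕ => if k ≤ n then lstir lam n k / n ! else 0) := by
  ext n
  rw [PowerSeries.coeff_smul]
  have : (PowerSeries.mk (fun m : ℕ =>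
      if m = 0 then (0 : ℝ) else lam ^ (m - 1) / m)) = Lser lam := rfl
  rw [this, coeff_L_pow lam k n, PowerSeries.coeff_mk]
  have hkf : ((k ! : ℕ) : ℝ) ≠ 0 := by exact_mod_cast Nat.factorial_ne_zero k
  by_cases h : k ≤ n
  · rw [if_pos h, smul_eq_mul]
    field_simp
  · rw [if_neg h, lstir_zero_of_lt lam (Nat.lt_of_not_le h)]
    simp
end
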